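/- The strengthened physical update is an approximate physical update: let ⪯ be an estimator on the flow monoid and define up♯(com)(s) = up(com)(s) if up(com)(s) ≠ ⊤ and s ⪯ctx t for every t ∈ up(com)(s), and up♯(com)(s) = ⊤ otherwise (lifted to predicates by joins). Then (i) up(com)(s) ⊑ up♯(com)(s) for every predicate s, and (ii) if up♯(com)(s) ≠ ⊤ and s ⋆ u is defined, then up♯(com)(s ⋆ u) = up♯(com)(s) ⌢ u. -/

import Mathlib

/-!
Part (i) holds pointwise, since `up♯(com)(s)` is either `up(com)(s)` or `⊤`. For (ii), the frame
property of `up` reduces the claim to `⪯ctx` being a congruence for composition: if `s ⪯ctx s'`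
and `s ⋆ u` is defined, then `s ⌢ u ⪯ctx s' ⌢ u`.

For an inflow `i ≤ (s ⌢ u).in`, the flow of `s ⌢ u` is the join of an alternating approximation
that solves `s` given the current flow on `u`, and then `u` given the resulting flow on `s`. Every
stage feeds `s` an inflow below `s.in`, because in `s ⋆ u` the node `u` sends `s` exactly the
inflow `s` expects and the flows of `s ⋆ u` are those of its components. Hence `s ⪯ctx s'` relates
the outflows of `s` and `s'` at each stage, by induction the stages of the two compositions are
related, and stability of `⪯` under joins passes this to the flows themselves.
-/

universe u

/-- A flow monoid: a commutative monoid whose natural order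
(`m ≤ n ↔ ∃ o, n = m + o`) is a partial order that forms an ω-cpo, with
continuous addition. `csup` assigns to every ascending chain its join. -/
class FlowMonoid (M : Type u) extends AddCommMonoid M, PartialOrder M, OrderBot M,
    IsOrderedAddMonoid M, CanonicallyOrderedAdd M where
  /-- The join of an ascending chain. -/
  csup : (ℕ → M) → M
  isLUB_csup : ∀ K : ℕ → M, Monotone K → IsLUB (Set.range K) (csup K)
  add_csup : ∀ (n : M) (K : ℕ → M), Monotone K → n + csup K = csup fun i => n + K i

variable {M : Type u} [FlowMonoid M]

/-- Continuity: `f` commutes with joins of ascending chains. -/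
def FMCont (f : M → M) : Prop :=
  ∀ K : ℕ → M, Monotone K →
    IsLUB (Set.range fun i => f (K i)) (f (FlowMonoid.csup K))

/-- A flow graph: a finite set of nodes `X ⊆ ℕ`, continuous edge functions, and
a finitely supported inflow from sources outside `X` into `X`. (The edge
functions of sources outside `X` and the inflow outside its domain are
canonically zero.) -/
structure FlowGraph (M : Type u) [FlowMonoid M] where
  /-- The nodes. -/
  X : Finset ℕ
  /-- The edge functions: `E x y` labels the edge from `x` to `y`. -/
  E : ℕ → ℕ → M → M
  /-- The inflow: `inflow y x` is the flow the graph receives at `x ∈ X` from the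
  external node `y ∉ X`. -/
  inflow : ℕ → ℕ → M
  econt : ∀ x y, x ∈ X → FMCont (E x y)
  edom : ∀ x y, x ∉ X → E x y = fun _ => 0
  inflow_fin : ∀ x, (Function.support fun y => inflow y x).Finite
  inflow_dom : ∀ y x, inflow y x ≠ 0 → y ∉ X ∧ x ∈ X

namespace FlowGraph

/-- One step of the flow fixed-point computation, with inflow `i`. -/
noncomputable def stepWith (h : FlowGraph M) (i : ℕ → ℕ → M) (c : ℕ → M) : ℕ → M :=
  fun x => if x ∈ h.X then (∑ᶠ y, i y x) + ∑ y ∈ h.X, h.E y x (c y) else 0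

/-- The flow for a custom inflow `i`, obtained by Kleene iteration: the least
function satisfying the flow equation. -/
noncomputable def flowWith (h : FlowGraph M) (i : ℕ → ℕ → M) : ℕ → M :=
  fun x => FlowMonoid.csup fun n => (h.stepWith i)^[n] (fun _ => 0) x

/-- The flow of a flow graph. -/
noncomputable def flow (h : FlowGraph M) : ℕ → M := h.flowWith h.inflow

/-- The outflow of a flow graph: `out x y = E x y (flow x)`. -/
noncomputable def out (h : FlowGraph M) (x y : ℕ) : M := h.E x y (h.flow x)

/-- The transfer function: maps an inflow `i` to the resulting outflow at `y`. -/
noncomputable def tf (h : FlowGraph M) (i : ℕ → ℕ → M) (y : ℕ) : M :=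
  ∑ x ∈ h.X, h.E x y (h.flowWith i x)

/-- The ghost multiplication of flow graphs: disjoint union of the node sets and
edges; the inflow of each component is restricted to sources outside the other. -/
def gmul (s t : FlowGraph M) : FlowGraph M where
  X := s.X ∪ t.X
  E := fun x y => if x ∈ s.X then s.E x y else t.E x y
  inflow := fun y x => if y ∈ s.X ∪ t.X then 0 else s.inflow y x + t.inflow y x
  econt := by
    intro x y hx
    try dsimp only
    by_cases hs : x ∈ s.X
    · rw [if_pos hs]; exact s.econt x y hs
    · rw [if_neg hs]
      rcases Finset.mem_union.mp hx with h | h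
      · exact absurd h hs
      · exact t.econt x y h
  edom := by
    intro x y hx
    try dsimp only
    rw [if_neg fun h => hx (Finset.mem_union_left _ h)]
    exact t.edom x y fun h => hx (Finset.mem_union_right _ h)
  inflow_fin := by
    intro x
    refine Set.Finite.subset ((s.inflow_fin x).union (t.inflow_fin x)) ?_
    intro y hy
    rw [Function.mem_support] at hy
    try dsimp only at hy
    by_cases hmem : y ∈ s.X ∪ t.X
    · rw [if_pos hmem] at hy; exact absurd rfl hy
    · rw [if_neg hmem] at hy
      by_cases h1 : s.inflow y x = 0
      · have h2 : t.inflow y x ≠ 0 := fun h2 => hy (by rw [h1, h2, add_zero])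
        exact Set.mem_union_right _ (Function.mem_support.mpr h2)
      · exact Set.mem_union_left _ (Function.mem_support.mpr h1)
  inflow_dom := by
    intro y x hy
    try dsimp only at hy
    by_cases hmem : y ∈ s.X ∪ t.X
    · rw [if_pos hmem] at hy; exact absurd rfl hy
    · rw [if_neg hmem] at hy
      refine ⟨hmem, ?_⟩
      by_cases h1 : s.inflow y x = 0
      · have h2 : t.inflow y x ≠ 0 := fun h2 => hy (by rw [h1, h2, add_zero])
        exact Finset.mem_union_right _ (t.inflow_dom y x h2).2
      · exact Finset.mem_union_left _ (s.inflow_dom y x h1).2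

/-- Definedness of the multiplication `s ⋆ t` of flow graphs: the ghost
multiplication is defined, the inflow expectation of each graph at the mutual
boundary matches the outflow of the other, and the flows are preserved in the
composition (whose result is then `gmul s t`). -/
def MDef (s t : FlowGraph M) : Prop :=
  Disjoint s.X t.X ∧
  (∀ x ∈ s.X, ∀ y ∈ t.X, s.out x y = t.inflow x y ∧ t.out y x = s.inflow y x) ∧
  (∀ x ∈ s.X, (gmul s t).flow x = s.flow x) ∧
  (∀ y ∈ t.X, (gmul s t).flow y = t.flow y)

end FlowGraph

/-- An estimator on the flow monoid: a precongruence that is stable under joins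
of ascending chains and over which the edge functions (i.e. the continuous
functions) are monotonic. -/
def IsEstimator (r : M → M → Prop) : Prop :=
  -- (E1) reflexive and transitive
  (∀ m : M, r m m) ∧
  (∀ m n o : M, r m n → r n o → r m o) ∧
  -- (E2) compatible with addition
  (∀ m n o : M, r m n → r (m + o) (n + o)) ∧
  -- (E3) stable under joins of ascending chains
  (∀ K L : ℕ → M, Monotone K → Monotone L → (∀ i, r (K i) (L i)) →
    r (FlowMonoid.csup K) (FlowMonoid.csup L)) ∧
  -- (E4) edge functions are monotonic
  (∀ f : M → M, FMCont f → ∀ m n : M, r m n → r (f m) (f n))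

/-- The estimator induced on flow graphs: same nodes, same inflow, and the
transfer functions are related for every smaller inflow. -/
def ctxLe (r : M → M → Prop) (s₁ s₂ : FlowGraph M) : Prop :=
  s₁.X = s₂.X ∧ s₁.inflow = s₂.inflow ∧
  ∀ i : ℕ → ℕ → M, (∀ y x, i y x ≤ s₁.inflow y x) →
    ∀ y, y ∉ s₁.X → r (s₁.tf i y) (s₂.tf i y)

/-- `inflowLe r Y X i₁ i₂` is the relation `i₁ ⪯^Y i₂` on inflows over node set
`X`: the inflows agree on all sources outside `Y`, and for each target the sums
of the contributions from `Y` are related by `r`. -/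
def inflowLe (r : M → M → Prop) (Y X : Finset ℕ) (i₁ i₂ : ℕ → ℕ → M) : Prop :=
  (∀ y, y ∉ Y → ∀ x, i₁ y x = i₂ y x) ∧
  (∀ x ∈ X, r (∑ y ∈ Y, i₁ y x) (∑ y ∈ Y, i₂ y x))

attribute [local instance] Classical.propDecidable

/-- Predicates over flow graphs: sets of flow graphs plus a top element `⊤`. -/
abbrev FPred (M : Type u) [FlowMonoid M] := WithTop (Set (FlowGraph M))

/-- The ghost multiplication `⌢` lifted to predicates (`⊤` is absorbing). -/
def gstarFP (a b : FPred M) : FPred M :=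
  WithTop.recTopCoe ⊤
    (fun a' => WithTop.recTopCoe ⊤
      (fun b' => (({w | ∃ s ∈ a', ∃ t ∈ b', Disjoint s.X t.X ∧ w = FlowGraph.gmul s t} :
        Set (FlowGraph M)) : FPred M)) b) a

/-- A map from flow graphs to predicates, lifted to predicates by joins. -/
noncomputable def liftUp (up : FlowGraph M → FPred M) (a : FPred M) : FPred M :=
  WithTop.recTopCoe ⊤ (fun a' => ⨆ s ∈ a', up s) a

/-- The approximate physical update: the physical update strengthened by the
estimator; it aborts if the estimator cannot be established. -/
noncomputable def absUp (r : M → M → Prop) (up : FlowGraph M → FPred M)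
    (s : FlowGraph M) : FPred M :=
  if up s ≠ ⊤ ∧ ∀ A : Set (FlowGraph M), up s = ↑A → ∀ t ∈ A, ctxLe r s t then up s
  else ⊤

namespace FlowMonoid

lemma le_csup {K : ℕ → M} (hK : Monotone K) (n : ℕ) : K n ≤ csup K :=
  (isLUB_csup K hK).1 ⟨n, rfl⟩

lemma csup_le {K : ℕ → M} (hK : Monotone K) {b : M} (h : ∀ n, K n ≤ b) : csup K ≤ b :=
  (isLUB_csup K hK).2 (by rintro _ ⟨n, rfl⟩; exact h n)

lemma csup_mono {K L : ℕ → M} (hK : Monotone K) (hL : Monotone L) (h : K ≤ L) :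
    csup K ≤ csup L :=
  csup_le hK fun n => (h n).trans (le_csup hL n)

lemma csup_eq_of_isLUB {K : ℕ → M} (hK : Monotone K) {b : M} (h : IsLUB (Set.range K) b) :
    csup K = b :=
  (isLUB_csup K hK).unique h

lemma csup_const (m : M) : csup (fun _ : ℕ => m) = m :=
  csup_eq_of_isLUB monotone_const (by rw [Set.range_const]; exact isLUB_singleton)

lemma csup_succ {K : ℕ → M} (hK : Monotone K) : csup (fun n => K (n + 1)) = csup K :=
  have hK' : Monotone fun n => K (n + 1) := fun _ _ h => hK (Nat.succ_le_succ h)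
  le_antisymm (csup_le hK' fun n => le_csup hK (n + 1))
    (csup_le hK fun n => (hK n.le_succ).trans (le_csup hK' n))

lemma csup_add_csup {K L : ℕ → M} (hK : Monotone K) (hL : Monotone L) :
    csup K + csup L = csup (fun n => K n + L n) := by
  have hKL : Monotone fun n => K n + L n := hK.add hL
  refine le_antisymm ?_ (csup_le hKL fun n => add_le_add (le_csup hK n) (le_csup hL n))
  -- `K p + L q ≤ K (max p q) + L (max p q)`: the double join is the diagonal join.
  rw [add_csup _ _ hL]
  refine csup_le (fun _ _ h => add_le_add_right (hL h) _) fun q => ?_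
  rw [add_comm, add_csup _ _ hK]
  refine csup_le (fun _ _ h => add_le_add_right (hK h) _) fun p => ?_
  calc L q + K p ≤ K (max p q) + L (max p q) := by
        rw [add_comm]; exact add_le_add (hK (le_max_left p q)) (hL (le_max_right p q))
    _ ≤ _ := le_csup hKL _

lemma sum_csup {T : Finset ℕ} {K : ℕ → ℕ → M} (hK : ∀ x ∈ T, Monotone (K x)) :
    ∑ x ∈ T, csup (K x) = csup (fun n => ∑ x ∈ T, K x n) := by
  induction T using Finset.induction with
  | empty => simp only [Finset.sum_empty]; exact (csup_const 0).symm
  | @insert a T ha ih =>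
    have hT : ∀ x ∈ T, Monotone (K x) := fun x hx => hK x (Finset.mem_insert_of_mem hx)
    simp only [Finset.sum_insert ha]
    rw [ih hT, csup_add_csup (hK a (Finset.mem_insert_self a T))
      (fun _ _ h => Finset.sum_le_sum fun x hx => hT x hx h)]

end FlowMonoid

open FlowMonoid

lemma FMCont.monotone {f : M → M} (hf : FMCont f) : Monotone f := by
  intro m n hmn
  -- The chain `m, n, n, …` has join `n`.
  let K : ℕ → M := fun j => if j = 0 then m else n
  have hK : Monotone K := monotone_nat_of_le_succ fun j => by
    rcases j with _ | j <;> simp [K, hmn]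
  have hKn : csup K = n := csup_eq_of_isLUB hK
    ⟨by rintro _ ⟨j, rfl⟩; rcases j with _ | j <;> simp [K, hmn],
      fun b hb => hb ⟨1, rfl⟩⟩
  have := (hf K hK).1 ⟨0, rfl⟩
  rwa [hKn] at this

lemma FMCont.map_csup {f : M → M} (hf : FMCont f) {K : ℕ → M} (hK : Monotone K) :
    f (csup K) = csup (fun n => f (K n)) :=
  (csup_eq_of_isLUB (hf.monotone.comp hK) (hf K hK)).symm

lemma FlowMonoid.sum_map_csup {T : Finset ℕ} {f : ℕ → M → M}
    (hf : ∀ x ∈ T, FMCont (f x)) {c : ℕ → ℕ → M} (hc : Monotone c) :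
    ∑ x ∈ T, f x (csup fun n => c n x) = csup (fun n => ∑ x ∈ T, f x (c n x)) := by
  rw [← sum_csup (K := fun x n => f x (c n x))
    fun x hx => (hf x hx).monotone.comp fun _ _ h => hc h x]
  exact Finset.sum_congr rfl fun x hx => (hf x hx).map_csup fun _ _ h => hc h x

namespace FlowGraph

variable (h : FlowGraph M)

lemma stepWith_of_mem (i : ℕ → ℕ → M) (c : ℕ → M) {x : ℕ} (hx : x ∈ h.X) :
    h.stepWith i c x = (∑ᶠ y, i y x) + ∑ y ∈ h.X, h.E y x (c y) :=
  if_pos hx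

lemma stepWith_of_notMem (i : ℕ → ℕ → M) (c : ℕ → M) {x : ℕ} (hx : x ∉ h.X) :
    h.stepWith i c x = 0 :=
  if_neg hx

lemma stepWith_mono (i : ℕ → ℕ → M) : Monotone (h.stepWith i) := by
  intro c c' hc x
  by_cases hx : x ∈ h.X
  · rw [stepWith_of_mem h i c hx, stepWith_of_mem h i c' hx]
    exact add_le_add_right (Finset.sum_le_sum fun y hy => (h.econt y x hy).monotone (hc y)) _
  · rw [stepWith_of_notMem h i c hx, stepWith_of_notMem h i c' hx]

lemma monotone_iterate_stepWith (i : ℕ → ℕ → M) :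
    Monotone fun n => (h.stepWith i)^[n] (fun _ => 0) :=
  (h.stepWith_mono i).monotone_iterate_of_le_map fun _ => zero_le

lemma flowWith_le_of_stepWith_le {i : ℕ → ℕ → M} {c : ℕ → M}
    (hc : h.stepWith i c ≤ c) : h.flowWith i ≤ c := by
  have hiter : ∀ n, (h.stepWith i)^[n] (fun _ => 0) ≤ c := by
    intro n
    induction n with
    | zero => exact fun _ => zero_le
    | succ n ih =>
      rw [Function.iterate_succ_apply']
      exact (h.stepWith_mono i ih).trans hc
  exact fun x => csup_le (fun _ _ hmn => h.monotone_iterate_stepWith i hmn x) fun n => hiter n x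

lemma stepWith_csup (i : ℕ → ℕ → M) {c : ℕ → ℕ → M} (hc : Monotone c) (x : ℕ) :
    h.stepWith i (fun y => csup fun n => c n y) x = csup fun n => h.stepWith i (c n) x := by
  by_cases hx : x ∈ h.X
  · simp only [stepWith_of_mem h i _ hx]
    rw [sum_map_csup (fun y hy => h.econt y x hy) hc, add_csup]
    exact fun _ _ hmn => Finset.sum_le_sum fun y hy => (h.econt y x hy).monotone (hc hmn y)
  · simp only [stepWith_of_notMem h i _ hx]
    exact (csup_const 0).symm

lemma stepWith_flowWith (i : ℕ → ℕ → M) : h.stepWith i (h.flowWith i) = h.flowWith i := by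
  funext x
  refine (h.stepWith_csup i (h.monotone_iterate_stepWith i) x).trans ?_
  simp only [← Function.iterate_succ_apply' (h.stepWith i)]
  exact csup_succ fun _ _ hmn => h.monotone_iterate_stepWith i hmn x

end FlowGraph

namespace IsEstimator

variable {r : M → M → Prop} (hr : IsEstimator r)
include hr

lemma refl (m : M) : r m m := hr.1 m

lemma trans {m n o : M} (hmn : r m n) (hno : r n o) : r m o := hr.2.1 m n o hmn hno

lemma csup {K L : ℕ → M} (hK : Monotone K) (hL : Monotone L) (h : ∀ n, r (K n) (L n)) :
    r (FlowMonoid.csup K) (FlowMonoid.csup L) :=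
  hr.2.2.2.1 K L hK hL h

lemma map {f : M → M} (hf : FMCont f) {m n : M} (h : r m n) : r (f m) (f n) :=
  hr.2.2.2.2 f hf m n h

lemma add {a a' b b' : M} (ha : r a a') (hb : r b b') : r (a + b) (a' + b') := by
  refine hr.trans (hr.2.2.1 a a' b ha) ?_
  rw [add_comm a', add_comm a']
  exact hr.2.2.1 b b' a' hb

lemma sum {T : Finset ℕ} {f g : ℕ → M} (h : ∀ x ∈ T, r (f x) (g x)) :
    r (∑ x ∈ T, f x) (∑ x ∈ T, g x) := by
  induction T using Finset.induction with
  | empty => simpa using hr.refl 0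
  | @insert a T ha ih =>
    rw [Finset.sum_insert ha, Finset.sum_insert ha]
    exact hr.add (h a (Finset.mem_insert_self a T))
      (ih fun x hx => h x (Finset.mem_insert_of_mem hx))

lemma flowWith_rel (h : FlowGraph M) {j j' : ℕ → ℕ → M}
    (hj : ∀ x ∈ h.X, r (∑ᶠ y, j y x) (∑ᶠ y, j' y x)) (x : ℕ) :
    r (h.flowWith j x) (h.flowWith j' x) := by
  have hiter : ∀ n x,
      r ((h.stepWith j)^[n] (fun _ => 0) x) ((h.stepWith j')^[n] (fun _ => 0) x) := by
    intro n
    induction n with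
    | zero => exact fun _ => hr.refl 0
    | succ n ih =>
      intro x
      simp only [Function.iterate_succ_apply']
      by_cases hx : x ∈ h.X
      · rw [h.stepWith_of_mem _ _ hx, h.stepWith_of_mem _ _ hx]
        exact hr.add (hj x hx) (hr.sum fun y hy => hr.map (h.econt y x hy) (ih y))
      · rw [h.stepWith_of_notMem _ _ hx, h.stepWith_of_notMem _ _ hx]
        exact hr.refl 0
  exact hr.csup (fun _ _ hmn => h.monotone_iterate_stepWith j hmn x)
    (fun _ _ hmn => h.monotone_iterate_stepWith j' hmn x) fun n => hiter n x

lemma tf_rel (h : FlowGraph M) {j j' : ℕ → ℕ → M}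
    (hj : ∀ x ∈ h.X, r (∑ᶠ y, j y x) (∑ᶠ y, j' y x)) (y : ℕ) :
    r (h.tf j y) (h.tf j' y) :=
  hr.sum fun x hx => hr.map (h.econt x y hx) (hr.flowWith_rel h hj x)

end IsEstimator

lemma isEstimator_le : IsEstimator (· ≤ · : M → M → Prop) :=
  ⟨le_refl, fun _ _ _ => le_trans, fun _ _ o h => add_le_add_left h o,
    fun _ _ hK hL h => csup_mono hK hL h, fun _ hf _ _ h => hf.monotone h⟩

namespace FlowGraph

def inflowFrom (g : FlowGraph M) (c : ℕ → M) (i : ℕ → ℕ → M) (T : Finset ℕ) :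
    ℕ → ℕ → M :=
  fun y x => if x ∈ T then g.E y x (c y) + i y x else 0

lemma finsum_inflowFrom (g : FlowGraph M) (c : ℕ → M) {i : ℕ → ℕ → M} {T : Finset ℕ}
    {x : ℕ} (hi : (Function.support fun y => i y x).Finite) (hx : x ∈ T) :
    ∑ᶠ y, g.inflowFrom c i T y x = ∑ y ∈ g.X, g.E y x (c y) + ∑ᶠ y, i y x := by
  have hsupp : Function.support (fun y => g.E y x (c y)) ⊆ g.X := fun y hy => by
    by_contra hyX
    exact hy (congrFun (g.edom y x hyX) (c y))
  simp only [inflowFrom, if_pos hx]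
  rw [finsum_add_distrib (g.X.finite_toSet.subset hsupp) hi,
    finsum_eq_sum_of_support_subset _ hsupp]

lemma stepWith_inflowFrom (h g : FlowGraph M) (c c' : ℕ → M) {i : ℕ → ℕ → M} {x : ℕ}
    (hi : (Function.support fun y => i y x).Finite) (hx : x ∈ h.X) :
    h.stepWith (g.inflowFrom c' i h.X) c x =
      (∑ᶠ y, i y x) + ((∑ y ∈ g.X, g.E y x (c' y)) + ∑ y ∈ h.X, h.E y x (c y)) := by
  rw [stepWith_of_mem h _ c hx, finsum_inflowFrom g c' hi hx]
  abel

variable {s u : FlowGraph M}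

lemma gmul_E_of_mem_left {y : ℕ} (hy : y ∈ s.X) : (gmul s u).E y = s.E y :=
  funext fun _ => if_pos hy

lemma gmul_E_of_mem_right (hd : Disjoint s.X u.X) {y : ℕ} (hy : y ∈ u.X) :
    (gmul s u).E y = u.E y :=
  funext fun _ => if_neg (Finset.disjoint_right.mp hd hy)

lemma sum_gmul_E (hd : Disjoint s.X u.X) (c : ℕ → M) (x : ℕ) :
    ∑ y ∈ (gmul s u).X, (gmul s u).E y x (c y) =
      (∑ y ∈ s.X, s.E y x (c y)) + ∑ y ∈ u.X, u.E y x (c y) := by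
  rw [show (gmul s u).X = s.X ∪ u.X from rfl, Finset.sum_union hd]
  congr 1
  · exact Finset.sum_congr rfl fun y hy => by rw [gmul_E_of_mem_left hy]
  · exact Finset.sum_congr rfl fun y hy => by rw [gmul_E_of_mem_right hd hy]

lemma gmul_stepWith_piecewise_left (hd : Disjoint s.X u.X) {i : ℕ → ℕ → M}
    (c c' : ℕ → M) {x : ℕ} (hi : (Function.support fun y => i y x).Finite) (hx : x ∈ s.X) :
    (gmul s u).stepWith i (s.X.piecewise c c') x = s.stepWith (u.inflowFrom c' i s.X) c x := by
  rw [stepWith_of_mem _ _ _ (Finset.mem_union_left _ hx), sum_gmul_E hd,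
    stepWith_inflowFrom s u c c' hi hx, add_comm (∑ y ∈ s.X, _)]
  congr 2 <;> refine Finset.sum_congr rfl fun y hy => ?_
  · rw [Finset.piecewise_eq_of_notMem _ _ _ (Finset.disjoint_right.mp hd hy)]
  · rw [Finset.piecewise_eq_of_mem _ _ _ hy]

lemma gmul_stepWith_piecewise_right (hd : Disjoint s.X u.X) {i : ℕ → ℕ → M}
    (c c' : ℕ → M) {x : ℕ} (hi : (Function.support fun y => i y x).Finite) (hx : x ∈ u.X) :
    (gmul s u).stepWith i (s.X.piecewise c c') x = u.stepWith (s.inflowFrom c i u.X) c' x := by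
  rw [stepWith_of_mem _ _ _ (Finset.mem_union_right _ hx), sum_gmul_E hd,
    stepWith_inflowFrom u s c' c hi hx]
  congr 2 <;> refine Finset.sum_congr rfl fun y hy => ?_
  · rw [Finset.piecewise_eq_of_mem _ _ _ hy]
  · rw [Finset.piecewise_eq_of_notMem _ _ _ (Finset.disjoint_right.mp hd hy)]

lemma gmul_stepWith_piecewise_le {i : ℕ → ℕ → M} {c c' : ℕ → M}
    (hc : c ≤ (gmul s u).flowWith i) (hc' : c' ≤ (gmul s u).flowWith i) :
    (gmul s u).stepWith i (s.X.piecewise c c') ≤ (gmul s u).flowWith i :=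
  ((gmul s u).stepWith_mono i (s.X.piecewise_le_of_le_of_le hc hc')).trans_eq
    ((gmul s u).stepWith_flowWith i)

lemma monotone_sum_E (h : FlowGraph M) {c : ℕ → ℕ → M} (hc : Monotone c) (y : ℕ) :
    Monotone fun n => ∑ x ∈ h.X, h.E x y (c n x) :=
  fun _ _ hmn => Finset.sum_le_sum fun x hx => (h.econt x y hx).monotone (hc hmn x)

lemma finite_support_of_le_inflow (h : FlowGraph M) {i : ℕ → ℕ → M}
    (hi : ∀ y x, i y x ≤ h.inflow y x) (x : ℕ) : (Function.support fun y => i y x).Finite :=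
  (h.inflow_fin x).subset fun y hy h0 => hy (nonpos_iff_eq_zero.mp (h0 ▸ hi y x))

lemma flowWith_le_flow (h : FlowGraph M) {i : ℕ → ℕ → M}
    (hi : ∀ y x, i y x ≤ h.inflow y x) : h.flowWith i ≤ h.flow :=
  isEstimator_le.flowWith_rel h fun x _ =>
    finsum_le_finsum' (h.finite_support_of_le_inflow hi x) (h.inflow_fin x) fun y => hi y x

lemma flowWith_inflowFrom_mono (h g : FlowGraph M) {i : ℕ → ℕ → M}
    (hi : ∀ x, (Function.support fun y => i y x).Finite) {c c' : ℕ → M} (hc : c ≤ c') :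
    h.flowWith (g.inflowFrom c i h.X) ≤ h.flowWith (g.inflowFrom c' i h.X) :=
  isEstimator_le.flowWith_rel h fun x hx => by
    rw [finsum_inflowFrom g c (hi x) hx, finsum_inflowFrom g c' (hi x) hx]
    exact add_le_add_left (Finset.sum_le_sum fun y hy => (g.econt y x hy).monotone (hc y)) _

/-- Alternating approximation of the flow of `s ⌢ u`: given the current flow on `u`, solve for
the flow on `s`, then, given that, for the flow on `u`. -/
noncomputable def altRight (s u : FlowGraph M) (i : ℕ → ℕ → M) : ℕ → ℕ → M
  | 0 => fun _ => 0
  | n + 1 => u.flowWith (s.inflowFrom (s.flowWith (u.inflowFrom (altRight s u i n) i s.X)) i u.X)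

noncomputable def altLeft (s u : FlowGraph M) (i : ℕ → ℕ → M) (n : ℕ) : ℕ → M :=
  s.flowWith (u.inflowFrom (altRight s u i n) i s.X)

noncomputable def altFlow (s u : FlowGraph M) (i : ℕ → ℕ → M) (n : ℕ) : ℕ → M :=
  s.X.piecewise (altLeft s u i n) (altRight s u i n)

section Alternation

variable {s u : FlowGraph M} {i : ℕ → ℕ → M}

lemma monotone_altRight (hi : ∀ x, (Function.support fun y => i y x).Finite) :
    Monotone (altRight s u i) := by
  refine monotone_nat_of_le_succ fun n => ?_
  induction n with
  | zero => exact fun _ => zero_le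
  | succ n ih => exact flowWith_inflowFrom_mono u s hi (flowWith_inflowFrom_mono s u hi ih)

lemma monotone_altLeft (hi : ∀ x, (Function.support fun y => i y x).Finite) :
    Monotone (altLeft s u i) :=
  fun _ _ hmn => flowWith_inflowFrom_mono s u hi (monotone_altRight hi hmn)

lemma monotone_altFlow (hi : ∀ x, (Function.support fun y => i y x).Finite) :
    Monotone (altFlow s u i) :=
  fun _ _ hmn => s.X.piecewise_le_piecewise (monotone_altLeft hi hmn) (monotone_altRight hi hmn)

lemma sum_gmul_E_altFlow (hd : Disjoint s.X u.X) (n y : ℕ) :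
    ∑ x ∈ (gmul s u).X, (gmul s u).E x y (altFlow s u i n x) =
      s.tf (u.inflowFrom (altRight s u i n) i s.X) y +
        ∑ x ∈ u.X, u.E x y (altRight s u i n x) := by
  rw [sum_gmul_E hd]
  congr 1 <;> refine Finset.sum_congr rfl fun x hx => ?_
  · rw [altFlow, Finset.piecewise_eq_of_mem _ _ _ hx, altLeft]
  · rw [altFlow, Finset.piecewise_eq_of_notMem _ _ _ (Finset.disjoint_right.mp hd hx)]

variable (hd : Disjoint s.X u.X) (hi : ∀ x, (Function.support fun y => i y x).Finite)
include hd hi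

lemma flowWith_inflowFrom_le_left {c : ℕ → M} (hc : c ≤ (gmul s u).flowWith i) :
    s.flowWith (u.inflowFrom c i s.X) ≤ (gmul s u).flowWith i := by
  refine s.flowWith_le_of_stepWith_le fun x => ?_
  by_cases hx : x ∈ s.X
  · rw [← gmul_stepWith_piecewise_left hd _ _ (hi x) hx]
    exact gmul_stepWith_piecewise_le le_rfl hc x
  · rw [stepWith_of_notMem s _ _ hx]
    exact zero_le

lemma flowWith_inflowFrom_le_right {c : ℕ → M} (hc : c ≤ (gmul s u).flowWith i) :
    u.flowWith (s.inflowFrom c i u.X) ≤ (gmul s u).flowWith i := by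
  refine u.flowWith_le_of_stepWith_le fun x => ?_
  by_cases hx : x ∈ u.X
  · rw [← gmul_stepWith_piecewise_right hd _ _ (hi x) hx]
    exact gmul_stepWith_piecewise_le hc le_rfl x
  · rw [stepWith_of_notMem u _ _ hx]
    exact zero_le

lemma altRight_le_flowWith_gmul (n : ℕ) : altRight s u i n ≤ (gmul s u).flowWith i := by
  induction n with
  | zero => exact fun _ => zero_le
  | succ n ih =>
    exact flowWith_inflowFrom_le_right hd hi (flowWith_inflowFrom_le_left hd hi ih)

lemma altFlow_le_flowWith_gmul (n : ℕ) : altFlow s u i n ≤ (gmul s u).flowWith i :=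
  s.X.piecewise_le_of_le_of_le
    (flowWith_inflowFrom_le_left hd hi (altRight_le_flowWith_gmul hd hi n))
    (altRight_le_flowWith_gmul hd hi n)

lemma stepWith_altFlow_le (n : ℕ) :
    (gmul s u).stepWith i (altFlow s u i n) ≤ altFlow s u i (n + 1) := by
  intro x
  by_cases hxs : x ∈ s.X
  · calc (gmul s u).stepWith i (altFlow s u i n) x = altLeft s u i n x := by
          rw [altFlow, gmul_stepWith_piecewise_left hd _ _ (hi x) hxs]
          exact congrFun (s.stepWith_flowWith _) x
      _ ≤ altLeft s u i (n + 1) x := monotone_altLeft hi n.le_succ x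
      _ = altFlow s u i (n + 1) x := (Finset.piecewise_eq_of_mem _ _ _ hxs).symm
  by_cases hxu : x ∈ u.X
  · calc (gmul s u).stepWith i (altFlow s u i n) x
          = u.stepWith (s.inflowFrom (altLeft s u i n) i u.X) (altRight s u i n) x := by
          rw [altFlow, gmul_stepWith_piecewise_right hd _ _ (hi x) hxu]
      _ ≤ u.stepWith (s.inflowFrom (altLeft s u i n) i u.X) (altRight s u i (n + 1)) x :=
          u.stepWith_mono _ (monotone_altRight hi n.le_succ) x
      _ = altRight s u i (n + 1) x := congrFun (u.stepWith_flowWith _) x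
      _ = altFlow s u i (n + 1) x := (Finset.piecewise_eq_of_notMem _ _ _ hxs).symm
  · rw [stepWith_of_notMem _ _ _ (by simp [gmul, hxs, hxu])]
    exact zero_le

lemma flowWith_gmul_eq_csup_altFlow :
    (gmul s u).flowWith i = fun x => csup fun n => altFlow s u i n x := by
  have hiter : ∀ n, ((gmul s u).stepWith i)^[n] (fun _ => 0) ≤ altFlow s u i n := by
    intro n
    induction n with
    | zero => exact fun _ => zero_le
    | succ n ih =>
      rw [Function.iterate_succ_apply']
      exact ((gmul s u).stepWith_mono i ih).trans (stepWith_altFlow_le hd hi n)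
  funext x
  exact le_antisymm
    (csup_mono (fun _ _ hmn => (gmul s u).monotone_iterate_stepWith i hmn x)
      (fun _ _ hmn => monotone_altFlow hi hmn x) fun n => hiter n x)
    (csup_le (fun _ _ hmn => monotone_altFlow hi hmn x) fun n => altFlow_le_flowWith_gmul hd hi n x)

lemma tf_gmul_eq_csup (y : ℕ) :
    (gmul s u).tf i y =
      csup fun n => ∑ x ∈ (gmul s u).X, (gmul s u).E x y (altFlow s u i n x) := by
  rw [tf, flowWith_gmul_eq_csup_altFlow hd hi]
  exact sum_map_csup (fun x hx => (gmul s u).econt x y hx) (monotone_altFlow hi)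

end Alternation

end FlowGraph

open FlowGraph

lemma FlowGraph.MDef.inflowFrom_le_inflow {s u : FlowGraph M} (hmd : MDef s u)
    {i : ℕ → ℕ → M} (hi : ∀ y x, i y x ≤ (gmul s u).inflow y x) {c : ℕ → M}
    (hc : c ≤ (gmul s u).flow) (y x : ℕ) : u.inflowFrom c i s.X y x ≤ s.inflow y x := by
  by_cases hx : x ∈ s.X
  swap
  · rw [inflowFrom, if_neg hx]
    exact zero_le
  rw [inflowFrom, if_pos hx]
  have hgmul : (gmul s u).inflow y x =
      if y ∈ s.X ∪ u.X then 0 else s.inflow y x + u.inflow y x := rfl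
  by_cases hyu : y ∈ u.X
  · -- `u` feeds `s` exactly its outflow, and the flow of `s ⌢ u` on `u` is that of `u`.
    have hiy : i y x ≤ 0 :=
      (hi y x).trans_eq (by rw [hgmul, if_pos (Finset.mem_union_right _ hyu)])
    rw [nonpos_iff_eq_zero.mp hiy, add_zero, ← (hmd.2.1 x hx y hyu).2, out, ← hmd.2.2.2 y hyu]
    exact (u.econt y x hyu).monotone (hc y)
  · have hux : u.inflow y x = 0 := by
      by_contra h
      exact Finset.disjoint_left.mp hmd.1 hx (u.inflow_dom y x h).2
    rw [u.edom y x hyu, zero_add]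
    refine (hi y x).trans ?_
    rw [hgmul]
    split_ifs
    · exact zero_le
    · rw [hux, add_zero]

lemma FlowGraph.MDef.altRight_le_flow {s u : FlowGraph M} (hmd : MDef s u) {i : ℕ → ℕ → M}
    (hi : ∀ y x, i y x ≤ (gmul s u).inflow y x) (n : ℕ) :
    altRight s u i n ≤ (gmul s u).flow :=
  (altRight_le_flowWith_gmul hmd.1 ((gmul s u).finite_support_of_le_inflow hi) n).trans
    ((gmul s u).flowWith_le_flow hi)

namespace ctxLe

variable {r : M → M → Prop} {s s' u : FlowGraph M} {i : ℕ → ℕ → M}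
variable (hr : IsEstimator r) (hctx : ctxLe r s s') (hmd : MDef s u)
  (hi : ∀ y x, i y x ≤ (gmul s u).inflow y x)
include hr hctx hmd hi

lemma tf_inflowFrom_rel {c c' : ℕ → M} (hcF : c ≤ (gmul s u).flow)
    (hc : ∀ y, r (c y) (c' y)) {z : ℕ} (hz : z ∉ s.X) :
    r (s.tf (u.inflowFrom c i s.X) z) (s'.tf (u.inflowFrom c' i s'.X) z) := by
  have hfin := (gmul s u).finite_support_of_le_inflow hi
  rw [← hctx.1]
  refine hr.trans (hctx.2.2 _ (hmd.inflowFrom_le_inflow hi hcF) z hz)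
    (hr.tf_rel s' (fun x hx => ?_) z)
  rw [← hctx.1] at hx
  rw [finsum_inflowFrom u c (hfin x) hx, finsum_inflowFrom u c' (hfin x) hx]
  exact hr.add (hr.sum fun y hy => hr.map (u.econt y x hy) (hc y)) (hr.refl _)

lemma altRight_rel (n x : ℕ) : r (altRight s u i n x) (altRight s' u i n x) := by
  have hfin := (gmul s u).finite_support_of_le_inflow hi
  induction n generalizing x with
  | zero => exact hr.refl 0
  | succ n ih =>
    refine hr.flowWith_rel u (fun x hx => ?_) x
    rw [finsum_inflowFrom s _ (hfin x) hx, finsum_inflowFrom s' _ (hfin x) hx]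
    exact hr.add (tf_inflowFrom_rel hr hctx hmd hi (hmd.altRight_le_flow hi n) ih
      (Finset.disjoint_right.mp hmd.1 hx)) (hr.refl _)

end ctxLe

theorem ctxLe.gmul {r : M → M → Prop} (hr : IsEstimator r) {s s' u : FlowGraph M}
    (hctx : ctxLe r s s') (hmd : MDef s u) : ctxLe r (gmul s u) (gmul s' u) := by
  have hd' : Disjoint s'.X u.X := hctx.1 ▸ hmd.1
  refine ⟨by simp only [FlowGraph.gmul, hctx.1], by simp only [FlowGraph.gmul, hctx.1, hctx.2.1],
    fun i hi y hy => ?_⟩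
  have hfin := (FlowGraph.gmul s u).finite_support_of_le_inflow hi
  rw [tf_gmul_eq_csup hmd.1 hfin, tf_gmul_eq_csup hd' hfin]
  refine hr.csup (monotone_sum_E _ (monotone_altFlow hfin) y)
    (monotone_sum_E _ (monotone_altFlow hfin) y) fun n => ?_
  rw [sum_gmul_E_altFlow hmd.1, sum_gmul_E_altFlow hd']
  exact hr.add
    (hctx.tf_inflowFrom_rel hr hmd hi (hmd.altRight_le_flow hi n) (hctx.altRight_rel hr hmd hi n)
      fun h => hy (Finset.mem_union_left _ h))
    (hr.sum fun x hx => hr.map (u.econt x y hx) (hctx.altRight_rel hr hmd hi n x))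

section Update

variable {r : M → M → Prop} {up : FlowGraph M → FPred M}

lemma le_absUp (s : FlowGraph M) : up s ≤ absUp r up s := by
  unfold absUp
  split_ifs
  exacts [le_rfl, le_top]

lemma absUp_eq_of_forall_ctxLe {s : FlowGraph M} {A : Set (FlowGraph M)} (hA : up s = A)
    (h : ∀ t ∈ A, ctxLe r s t) : absUp r up s = up s :=
  if_pos ⟨hA ▸ WithTop.coe_ne_top, fun _ hB => WithTop.coe_injective (hA.symm.trans hB) ▸ h⟩

lemma exists_forall_ctxLe_of_absUp_ne_top {s : FlowGraph M} (h : absUp r up s ≠ ⊤) :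
    ∃ A : Set (FlowGraph M), up s = A ∧ ∀ t ∈ A, ctxLe r s t := by
  unfold absUp at h
  split_ifs at h with hs
  · obtain ⟨A, hA⟩ := WithTop.ne_top_iff_exists.mp hs.1
    exact ⟨A, hA.symm, hs.2 A hA.symm⟩
  · exact absurd rfl h

lemma liftUp_mono {f g : FlowGraph M → FPred M} (hfg : ∀ s, f s ≤ g s) (a : FPred M) :
    liftUp f a ≤ liftUp g a := by
  induction a using WithTop.recTopCoe with
  | top => exact le_rfl
  | coe A => exact iSup₂_mono fun s _ => hfg s

end Update

open FlowGraph in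
theorem approximate_physical_update_general (r : M → M → Prop) (hr : IsEstimator r)
    (up : FlowGraph M → FPred M)
    -- `up(com)(s ⋆ u) = up(com)(s) ⌢ u` whenever `up(com)(s) ≠ ⊤`
    (hdec : ∀ s u : FlowGraph M, MDef s u → up s ≠ ⊤ →
      up (gmul s u) = gstarFP (up s) (({u} : Set (FlowGraph M)) : FPred M)) :
    (∀ a : FPred M, liftUp up a ≤ liftUp (absUp r up) a) ∧
    (∀ s u : FlowGraph M, absUp r up s ≠ ⊤ → MDef s u →
      absUp r up (gmul s u) =
        gstarFP (absUp r up s) (({u} : Set (FlowGraph M)) : FPred M)) := by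
  refine ⟨liftUp_mono le_absUp, fun s u hs hmd => ?_⟩
  obtain ⟨A, hA, hctx⟩ := exists_forall_ctxLe_of_absUp_ne_top hs
  have hup : up s ≠ ⊤ := hA ▸ WithTop.coe_ne_top
  have hgmul : up (gmul s u) = ({w | ∃ s₁ ∈ A, ∃ t ∈ ({u} : Set (FlowGraph M)),
      Disjoint s₁.X t.X ∧ w = gmul s₁ t} : Set (FlowGraph M)) := by
    rw [hdec s u hmd hup, hA]
    rfl
  rw [absUp_eq_of_forall_ctxLe hA hctx, absUp_eq_of_forall_ctxLe hgmul, hdec s u hmd hup]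
  rintro _ ⟨s₁, hs₁, t, rfl, -, rfl⟩
  exact (hctx s₁ hs₁).gmul hr hmd

open FlowGraph in
/-- The strengthened physical update is an approximate physical
update: (i) it over-approximates the physical update on every predicate, and
(ii) if `up♯(com)(s) ≠ ⊤` and `s ⋆ u` is defined then
`up♯(com)(s ⋆ u) = up♯(com)(s) ⌢ u`. -/
theorem approximate_physical_update (r : M → M → Prop) (hr : IsEstimator r)
    (up : FlowGraph M → FPred M)
    -- physical updates change neither the nodes nor the inflow
    (hdom : ∀ (s : FlowGraph M) (A : Set (FlowGraph M)), up s = ↑A →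
      ∀ t ∈ A, t.X = s.X ∧ t.inflow = s.inflow)
    -- `up(com)(s ⋆ u) = up(com)(s) ⌢ u` whenever `up(com)(s) ≠ ⊤`
    (hdec : ∀ s u : FlowGraph M, MDef s u → up s ≠ ⊤ →
      up (gmul s u) = gstarFP (up s) (({u} : Set (FlowGraph M)) : FPred M)) :
    (∀ a : FPred M, liftUp up a ≤ liftUp (absUp r up) a) ∧
    (∀ s u : FlowGraph M, absUp r up s ≠ ⊤ → MDef s u →
      absUp r up (gmul s u) =
        gstarFP (absUp r up s) (({u} : Set (FlowGraph M)) : FPred M)) :=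
  approximate_physical_update_general r hr up hdec
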